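/- arXiv:1106.4947 — 2 statements merged into one kernel-verified Lean document; each statement's English description precedes it below -/
import Mathlib

section
/- Let ∇ be the metric connection with skew torsion H on an oriented Riemannian four-manifold, and let h = *H. Then ∇h = ∇^g h, i.e. the covariant derivatives of the 1-form h with respect to ∇ and the Levi-Civita connection coincide. -/
open scoped BigOperators

noncomputable section

/-- The canonical image of a real scalar in the algebra `F` of smooth functions. -/
def cR (F : Type) [CommRing F] [Algebra ℝ F] (r : ℝ) : F := algebraMap ℝ F r

variable {F : Type} [CommRing F] [Algebra ℝ F]
variable {V : Type} [AddCommGroup V] [Module F V]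

/-- `act X f` is the derivative of the function `f` along the vector field `X`:
it is additive, a derivation in `f`, kills constants, and is `F`-linear in `X`. -/
structure IsDerivAction (act : V → F → F) : Prop where
  map_add : ∀ (X : V) (f g : F), act X (f + g) = act X f + act X g
  deriv : ∀ (X : V) (f g : F), act X (f * g) = f * act X g + g * act X f
  map_const : ∀ (X : V) (r : ℝ), act X (algebraMap ℝ F r) = 0
  add_vec : ∀ (X Y : V) (f : F), act (X + Y) f = act X f + act Y f
  smul_vec : ∀ (f : F) (X : V) (g : F), act (f • X) g = f * act X g

/-- An affine connection on vector fields. -/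
structure IsConnection (act : V → F → F) (D : V → V → V) : Prop where
  add_left : ∀ X Y Z : V, D (X + Y) Z = D X Z + D Y Z
  smul_left : ∀ (f : F) (X Y : V), D (f • X) Y = f • D X Y
  add_right : ∀ X Y Z : V, D X (Y + Z) = D X Y + D X Z
  leibniz : ∀ (X : V) (f : F) (Y : V), D X (f • Y) = act X f • Y + f • D X Y

/-- The connection `D` is metric: `∇ g = 0`. -/
def IsMetricConn (g : V → V → F) (act : V → F → F) (D : V → V → V) : Prop :=
  ∀ X Y Z : V, act X (g Y Z) = g (D X Y) Z + g Y (D X Z)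

/-- The (1,2) torsion tensor `T(X,Y) = ∇_X Y - ∇_Y X - [X,Y]`. -/
def torsionVec (bracket : V → V → V) (D : V → V → V) (X Y : V) : V :=
  D X Y - D Y X - bracket X Y

/-- A 1-form: an `F`-linear functional on vector fields. -/
structure Is1Form (h : V → F) : Prop where
  map_add : ∀ X Y : V, h (X + Y) = h X + h Y
  map_smul : ∀ (f : F) (X : V), h (f • X) = f * h X

/-- A 3-form: an alternating `F`-trilinear form on vector fields. -/
structure Is3Form (H : V → V → V → F) : Prop where
  add_left : ∀ X X' Y Z : V, H (X + X') Y Z = H X Y Z + H X' Y Z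
  smul_left : ∀ (f : F) (X Y Z : V), H (f • X) Y Z = f * H X Y Z
  alt12 : ∀ X Y Z : V, H X Y Z = - H Y X Z
  alt23 : ∀ X Y Z : V, H X Y Z = - H X Z Y

/-- The curvature operator `R(X,Y)Z` of a connection. -/
def curvVec (bracket D : V → V → V) (X Y Z : V) : V :=
  D X (D Y Z) - D Y (D X Z) - D (bracket X Y) Z

/-- The (0,4) curvature tensor `R(X,Y,Z,W) = g(R(X,Y)Z, W)`. -/
def curv4 (g : V → V → F) (bracket D : V → V → V) (X Y Z W : V) : F :=
  g (curvVec bracket D X Y Z) W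

/-- Covariant derivative of a 1-form: `(∇_X h)(Y)`. -/
def covDer1 (act : V → F → F) (C : V → V → V) (h : V → F) (X Y : V) : F :=
  act X (h Y) - h (C X Y)

/-- Covariant derivative of a 3-form: `(∇_X H)(Y,Z,W)`. -/
def covDer3 (act : V → F → F) (C : V → V → V) (H : V → V → V → F) (X Y Z W : V) : F :=
  act X (H Y Z W) - H (C X Y) Z W - H Y (C X Z) W - H Y Z (C X W)

/-- Exterior derivative of a 1-form. -/
def extDer1 (act : V → F → F) (bracket : V → V → V) (h : V → F) (X Y : V) : F :=
  act X (h Y) - act Y (h X) - h (bracket X Y)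

/-- Exterior derivative of a 3-form. -/
def extDer3 (act : V → F → F) (bracket : V → V → V) (H : V → V → V → F) (X Y Z W : V) : F :=
  act X (H Y Z W) - act Y (H X Z W) + act Z (H X Y W) - act W (H X Y Z)
    - H (bracket X Y) Z W + H (bracket X Z) Y W - H (bracket X W) Y Z
    - H (bracket Y Z) X W + H (bracket Y W) X Z - H (bracket Z W) X Y

/-- `e` is a (global, positively oriented) orthonormal frame. -/
def IsONFrame {n : ℕ} (g : V → V → F) (e : Fin n → V) : Prop :=
  ∀ i j, g (e i) (e j) = if i = j then (1 : F) else 0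

/-- The frame `e` spans the vector fields. -/
def SpansVia {n : ℕ} (g : V → V → F) (e : Fin n → V) : Prop :=
  ∀ X : V, X = ∑ i, g X (e i) • e i

/-- The Ricci tensor `Ric(X,Y) = Σᵢ g(R(eᵢ,X)Y, eᵢ)`. -/
def ricci {n : ℕ} (g : V → V → F) (bracket D : V → V → V) (e : Fin n → V) (X Y : V) : F :=
  ∑ i, g (curvVec bracket D (e i) X Y) (e i)

/-- The scalar curvature. -/
def scal {n : ℕ} (g : V → V → F) (bracket D : V → V → V) (e : Fin n → V) : F :=
  ∑ j, ricci g bracket D e (e j) (e j)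

/-- The codifferential of a 3-form: `(d*H)(X,Y) = -Σᵢ (∇^g_{eᵢ} H)(eᵢ,X,Y)`. -/
def coDiff3 {n : ℕ} (act : V → F → F) (lc : V → V → V) (H : V → V → V → F)
    (e : Fin n → V) (X Y : V) : F :=
  - ∑ i, covDer3 act lc H (e i) (e i) X Y

/-- The codifferential of a 1-form: `d*h = -Σᵢ (∇^g_{eᵢ} h)(eᵢ)`. -/
def coDiff1 {n : ℕ} (act : V → F → F) (lc : V → V → V) (h : V → F) (e : Fin n → V) : F :=
  - ∑ i, covDer1 act lc h (e i) (e i)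

/-- The pointwise squared norm of a 1-form. -/
def normSq1 {n : ℕ} (e : Fin n → V) (h : V → F) : F := ∑ i, h (e i) * h (e i)

/-- The pointwise squared norm `‖H‖² = Σ_{i<j<k} H(eᵢ,eⱼ,eₖ)²` of a 3-form. -/
def normSq3 {n : ℕ} (e : Fin n → V) (H : V → V → V → F) : F :=
  ∑ i, ∑ j, ∑ k, if i < j ∧ j < k then H (e i) (e j) (e k) * H (e i) (e j) (e k) else 0

/-- The Levi-Civita symbol on four indices. -/
def eps4 (i j k l : Fin 4) : ℤ :=
  let v : Fin 4 → ℤ := ![((i : ℕ) : ℤ), ((j : ℕ) : ℤ), ((k : ℕ) : ℤ), ((l : ℕ) : ℤ)]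
  ∏ p ∈ Finset.univ.filter (fun p : Fin 4 × Fin 4 => p.1 < p.2), Int.sign (v p.2 - v p.1)

/-- Components of the Hodge dual 1-form `*H` of a 3-form, in an oriented orthonormal frame. -/
def hodge31 (e : Fin 4 → V) (H : V → V → V → F) (i : Fin 4) : F :=
  cR F (1/6) * ∑ j, ∑ k, ∑ l, eps4 i j k l • H (e j) (e k) (e l)

/-- Components of the Hodge dual of a 2-form, in an oriented orthonormal frame. -/
def hodge22 (e : Fin 4 → V) (α : V → V → F) (i j : Fin 4) : F :=
  cR F (1/2) * ∑ k, ∑ l, eps4 i j k l • α (e k) (e l)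

/-- Components of the Hodge dual 3-form `*ω` of a 1-form. -/
def hodge13 (e : Fin 4 → V) (h : V → F) (j k l : Fin 4) : F :=
  ∑ i, eps4 i j k l • h (e i)

/-- The function Hodge-dual to a 4-form. -/
def hodge40 (e : Fin 4 → V) (β : V → V → V → V → F) : F := β (e 0) (e 1) (e 2) (e 3)

/-- Components of the trace-free symmetric part `Z` of the Ricci tensor of `D`. -/
def zTensor (g : V → V → F) (bracket D : V → V → V) (e : Fin 4 → V) (i j : Fin 4) : F :=
  cR F (1/2) * (ricci g bracket D e (e i) (e j) + ricci g bracket D e (e j) (e i))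
    - cR F (1/4) * scal g bracket D e * (if i = j then 1 else 0)

/-- The Einstein condition with skew torsion: `Z^∇ + S(∇ *H) + (*dH/4) g = 0`,
in the components of an oriented orthonormal frame, where `h = *H`. -/
def EinsteinSkew (g : V → V → F) (act : V → F → F) (bracket D : V → V → V)
    (e : Fin 4 → V) (H : V → V → V → F) (h : V → F) : Prop :=
  ∀ i j : Fin 4,
    zTensor g bracket D e i j
      + cR F (1/2) * (covDer1 act D h (e i) (e j) + covDer1 act D h (e j) (e i))
      + cR F (1/4) * hodge40 e (extDer3 act bracket H) * (if i = j then 1 else 0) = 0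

/-- `Tr(*R*R)`, the Gauss-Bonnet integrand (up to the factor `8π²`). -/
def trStarRStarR (R : Fin 4 → Fin 4 → Fin 4 → Fin 4 → F) : F :=
  cR F (1/16) * ∑ a, ∑ b, ∑ c, ∑ d, ∑ a', ∑ b', ∑ c', ∑ d',
    (eps4 a b a' b' * eps4 c d c' d') • (R a' b' c d * R c' d' a b)

/-- `Tr(R*R)`, the signature integrand (up to the factor `12π²`). -/
def trRStarR (R : Fin 4 → Fin 4 → Fin 4 → Fin 4 → F) : F :=
  cR F (1/8) * ∑ a, ∑ b, ∑ c, ∑ d, ∑ e', ∑ f',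
    (eps4 c d e' f') • (R a b c d * R e' f' a b)

/-- Components of (4 times) the self-dual block `P₊ ∘ 𝓡 ∘ P₊` of a curvature operator. -/
def selfDualBlock (R : Fin 4 → Fin 4 → Fin 4 → Fin 4 → F) (a b c d : Fin 4) : F :=
  R a b c d
    + cR F (1/2) * ∑ i, ∑ j, eps4 a b i j • R i j c d
    + cR F (1/2) * ∑ i, ∑ j, eps4 c d i j • R a b i j
    + cR F (1/4) * ∑ i, ∑ j, ∑ k, ∑ l, (eps4 a b i j * eps4 c d k l) • R i j k l




-- Auxiliary machinery
def hodgeSign (i j k l : Fin 4) : ℤ :=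
  (((j:ℕ):ℤ)-((i:ℕ):ℤ))*(((k:ℕ):ℤ)-((i:ℕ):ℤ))*(((l:ℕ):ℤ)-((i:ℕ):ℤ))
    *(((k:ℕ):ℤ)-((j:ℕ):ℤ))*(((l:ℕ):ℤ)-((j:ℕ):ℤ))*(((l:ℕ):ℤ)-((k:ℕ):ℤ)) / 12

lemma epsE : ∀ i j k l : Fin 4, eps4 i j k l = hodgeSign i j k l := by decide

lemma cc6 : cR F (1/6) * 6 = 1 := by
  rw [cR, ← map_ofNat (algebraMap ℝ F) 6, ← map_mul]; norm_num
lemma cc2 : cR F (1/2) * 2 = 1 := by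
  rw [cR, ← map_ofNat (algebraMap ℝ F) 2, ← map_mul]; norm_num
lemma half_cancel (x : F) (hx : x + x = 0) : x = 0 := by
  linear_combination cR F (1/2) * hx - x * (cc2 (F := F))

lemma skew_key (A : Fin 4 → Fin 4 → Fin 4 → F)
    (alt12 : ∀ i j k, A i j k = - A j i k) (alt23 : ∀ i j k, A i j k = - A i k j) :
    ∀ a b : Fin 4,
      ∑ i, A a b i * (cR F (1/6) * ∑ j, ∑ k, ∑ l, eps4 i j k l • A j k l) = 0 := by
  have z12 : ∀ i k : Fin 4, A i i k = 0 := fun i k =>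
    half_cancel _ (by linear_combination alt12 i i k)
  have z23 : ∀ i j : Fin 4, A i j j = 0 := fun i j =>
    half_cancel _ (by linear_combination alt23 i j j)
  have z13 : ∀ i j : Fin 4, A i j i = 0 := fun i j => by
    rw [alt23 i j i, z12, neg_zero]
  have p132 : ∀ i j k : Fin 4, A i k j = - A i j k := fun i j k => by
    linear_combination alt23 i j k
  have p213 : ∀ i j k : Fin 4, A j i k = - A i j k := fun i j k => by
    linear_combination alt12 j i k
  have p231 : ∀ i j k : Fin 4, A j k i = A i j k := fun i j k => by
    linear_combination alt12 j k i - alt23 k j i + alt12 k i j - alt23 i j k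
  have p312 : ∀ i j k : Fin 4, A k i j = A i j k := fun i j k => by
    linear_combination alt12 k i j - alt23 i j k
  have p321 : ∀ i j k : Fin 4, A k j i = - A i j k := fun i j k => by
    linear_combination alt23 k j i - p312 i j k
  have evalfin : ((2:Fin 4):ℕ) = 2 ∧ ((3:Fin 4):ℕ) = 3 := ⟨rfl, rfl⟩
  have hv0 : cR F (1/6) * (∑ j, ∑ k, ∑ l, eps4 (0:Fin 4) j k l • A j k l) = A 1 2 3 := by
    simp only [Fin.sum_univ_four, epsE]
    norm_num [hodgeSign, evalfin.1, evalfin.2]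
    rw [p132 1 2 3, p213 1 2 3, p231 1 2 3, p312 1 2 3, p321 1 2 3]
    linear_combination A 1 2 3 * (cc6 (F := F))
  have hv1 : cR F (1/6) * (∑ j, ∑ k, ∑ l, eps4 (1:Fin 4) j k l • A j k l) = - A 0 2 3 := by
    simp only [Fin.sum_univ_four, epsE]
    norm_num [hodgeSign, evalfin.1, evalfin.2]
    rw [p132 0 2 3, p213 0 2 3, p231 0 2 3, p312 0 2 3, p321 0 2 3]
    linear_combination - A 0 2 3 * (cc6 (F := F))
  have hv2 : cR F (1/6) * (∑ j, ∑ k, ∑ l, eps4 (2:Fin 4) j k l • A j k l) = A 0 1 3 := by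
    simp only [Fin.sum_univ_four, epsE]
    norm_num [hodgeSign, evalfin.1, evalfin.2]
    rw [p132 0 1 3, p213 0 1 3, p231 0 1 3, p312 0 1 3, p321 0 1 3]
    linear_combination A 0 1 3 * (cc6 (F := F))
  have hv3 : cR F (1/6) * (∑ j, ∑ k, ∑ l, eps4 (3:Fin 4) j k l • A j k l) = - A 0 1 2 := by
    simp only [Fin.sum_univ_four, epsE]
    norm_num [hodgeSign, evalfin.1, evalfin.2]
    rw [p132 0 1 2, p213 0 1 2, p231 0 1 2, p312 0 1 2, p321 0 1 2]
    linear_combination - A 0 1 2 * (cc6 (F := F))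
  have c00 : A 0 0 0 * A 1 2 3 + A 0 0 1 * -A 0 2 3 + A 0 0 2 * A 0 1 3 + A 0 0 3 * -A 0 1 2 = (0:F) := by
    rw [z12 0 0, z12 0 1, z12 0 2, z12 0 3]; ring
  have c01 : A 0 1 0 * A 1 2 3 + A 0 1 1 * -A 0 2 3 + A 0 1 2 * A 0 1 3 + A 0 1 3 * -A 0 1 2 = (0:F) := by
    rw [z13 0 1, z23 0 1]; ring
  have c02 : A 0 2 0 * A 1 2 3 + A 0 2 1 * -A 0 2 3 + A 0 2 2 * A 0 1 3 + A 0 2 3 * -A 0 1 2 = (0:F) := by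
    rw [z13 0 2, p132 0 1 2, z23 0 2]; ring
  have c03 : A 0 3 0 * A 1 2 3 + A 0 3 1 * -A 0 2 3 + A 0 3 2 * A 0 1 3 + A 0 3 3 * -A 0 1 2 = (0:F) := by
    rw [z13 0 3, p132 0 1 3, p132 0 2 3, z23 0 3]; ring
  have c10 : A 1 0 0 * A 1 2 3 + A 1 0 1 * -A 0 2 3 + A 1 0 2 * A 0 1 3 + A 1 0 3 * -A 0 1 2 = (0:F) := by
    rw [z23 1 0, z13 1 0, p213 0 1 2, p213 0 1 3]; ring
  have c11 : A 1 1 0 * A 1 2 3 + A 1 1 1 * -A 0 2 3 + A 1 1 2 * A 0 1 3 + A 1 1 3 * -A 0 1 2 = (0:F) := by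
    rw [z12 1 0, z12 1 1, z12 1 2, z12 1 3]; ring
  have c12 : A 1 2 0 * A 1 2 3 + A 1 2 1 * -A 0 2 3 + A 1 2 2 * A 0 1 3 + A 1 2 3 * -A 0 1 2 = (0:F) := by
    rw [p231 0 1 2, z13 1 2, z23 1 2]; ring
  have c13 : A 1 3 0 * A 1 2 3 + A 1 3 1 * -A 0 2 3 + A 1 3 2 * A 0 1 3 + A 1 3 3 * -A 0 1 2 = (0:F) := by
    rw [p231 0 1 3, z13 1 3, p132 1 2 3, z23 1 3]; ring
  have c20 : A 2 0 0 * A 1 2 3 + A 2 0 1 * -A 0 2 3 + A 2 0 2 * A 0 1 3 + A 2 0 3 * -A 0 1 2 = (0:F) := by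
    rw [z23 2 0, p312 0 1 2, z13 2 0, p213 0 2 3]; ring
  have c21 : A 2 1 0 * A 1 2 3 + A 2 1 1 * -A 0 2 3 + A 2 1 2 * A 0 1 3 + A 2 1 3 * -A 0 1 2 = (0:F) := by
    rw [p321 0 1 2, z23 2 1, z13 2 1, p213 1 2 3]; ring
  have c22 : A 2 2 0 * A 1 2 3 + A 2 2 1 * -A 0 2 3 + A 2 2 2 * A 0 1 3 + A 2 2 3 * -A 0 1 2 = (0:F) := by
    rw [z12 2 0, z12 2 1, z12 2 2, z12 2 3]; ring
  have c23 : A 2 3 0 * A 1 2 3 + A 2 3 1 * -A 0 2 3 + A 2 3 2 * A 0 1 3 + A 2 3 3 * -A 0 1 2 = (0:F) := by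
    rw [p231 0 2 3, p231 1 2 3, z13 2 3, z23 2 3]; ring
  have c30 : A 3 0 0 * A 1 2 3 + A 3 0 1 * -A 0 2 3 + A 3 0 2 * A 0 1 3 + A 3 0 3 * -A 0 1 2 = (0:F) := by
    rw [z23 3 0, p312 0 1 3, p312 0 2 3, z13 3 0]; ring
  have c31 : A 3 1 0 * A 1 2 3 + A 3 1 1 * -A 0 2 3 + A 3 1 2 * A 0 1 3 + A 3 1 3 * -A 0 1 2 = (0:F) := by
    rw [p321 0 1 3, z23 3 1, p312 1 2 3, z13 3 1]; ring
  have c32 : A 3 2 0 * A 1 2 3 + A 3 2 1 * -A 0 2 3 + A 3 2 2 * A 0 1 3 + A 3 2 3 * -A 0 1 2 = (0:F) := by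
    rw [p321 0 2 3, p321 1 2 3, z23 3 2, z13 3 2]; ring
  have c33 : A 3 3 0 * A 1 2 3 + A 3 3 1 * -A 0 2 3 + A 3 3 2 * A 0 1 3 + A 3 3 3 * -A 0 1 2 = (0:F) := by
    rw [z12 3 0, z12 3 1, z12 3 2, z12 3 3]; ring
  intro a b
  rw [Fin.sum_univ_four, hv0, hv1, hv2, hv3]
  fin_cases a <;> fin_cases b
  · exact c00
  · exact c01
  · exact c02
  · exact c03
  · exact c10
  · exact c11
  · exact c12
  · exact c13
  · exact c20
  · exact c21
  · exact c22
  · exact c23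
  · exact c30
  · exact c31
  · exact c32
  · exact c33


lemma main_aux (A : Fin 4 → Fin 4 → Fin 4 → F)
    (alt12 : ∀ i j k, A i j k = - A j i k) (alt23 : ∀ i j k, A i j k = - A i k j)
    (x y : Fin 4 → F) :
    ∑ i, (∑ a, ∑ b, x a * (y b * A a b i))
        * (cR F (1/6) * ∑ j, ∑ k, ∑ l, eps4 i j k l • A j k l) = 0 := by
  have KA := skew_key A alt12 alt23
  have step1 : ∀ i : Fin 4,
      (∑ a, ∑ b, x a * (y b * A a b i))
          * (cR F (1/6) * ∑ j, ∑ k, ∑ l, eps4 i j k l • A j k l)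
        = ∑ a, ∑ b, x a * y b
            * (A a b i * (cR F (1/6) * ∑ j, ∑ k, ∑ l, eps4 i j k l • A j k l)) := by
    intro i; rw [Finset.sum_mul]
    refine Finset.sum_congr rfl fun a _ => ?_
    rw [Finset.sum_mul]
    exact Finset.sum_congr rfl fun b _ => by ring
  simp only [step1]
  rw [Finset.sum_comm]
  refine Finset.sum_eq_zero fun a _ => ?_
  rw [Finset.sum_comm]
  refine Finset.sum_eq_zero fun b _ => ?_
  rw [← Finset.mul_sum, KA a b, mul_zero]

/-- `∇ h = ∇^g h` for the torsion 1-form `h = *H`. -/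
theorem covariant_derivative_of_torsion_one_form
    (act : V → F → F) (bracket : V → V → V) (g : V → V → F)
    (hact : IsDerivAction act)
    (hg_symm : ∀ X Y : V, g X Y = g Y X)
    (lc : V → V → V) (hlc : IsConnection act lc)
    (hlc_metric : IsMetricConn g act lc)
    (hlc_torsionfree : ∀ X Y : V, torsionVec bracket lc X Y = 0)
    (H : V → V → V → F) (hH : Is3Form H)
    (D : V → V → V) (hD : IsConnection act D)
    (hDdef : ∀ X Y Z : V, g (D X Y) Z = g (lc X Y) Z + cR F (1/2) * H X Y Z)
    (e : Fin 4 → V) (he : IsONFrame g e) (hspan : SpansVia g e)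
    (h : V → F) (hh : Is1Form h) (hhdef : ∀ i, h (e i) = hodge31 e H i) :
    ∀ X Y : V, covDer1 act D h X Y = covDer1 act lc h X Y := by
  intro X Y
  have hsum : ∀ W : V, h W = ∑ i, g W (e i) * h (e i) := by
    intro W
    conv_lhs => rw [hspan W]
    rw [Fin.sum_univ_four, Fin.sum_univ_four]
    simp only [hh.map_add, hh.map_smul]
  have H2add : ∀ P Q R S : V, H P (Q + R) S = H P Q S + H P R S := by
    intro P Q R S
    rw [hH.alt12 P (Q + R) S, hH.add_left, hH.alt12 Q P S, hH.alt12 R P S]; ring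
  have H2smul : ∀ (f : F) (P Q S : V), H P (f • Q) S = f * H P Q S := by
    intro f P Q S
    rw [hH.alt12 P (f • Q) S, hH.smul_left, hH.alt12 Q P S]; ring
  have H3add : ∀ P Q R S : V, H P Q (R + S) = H P Q R + H P Q S := by
    intro P Q R S
    rw [hH.alt23 P Q (R + S), H2add, hH.alt23 P R Q, hH.alt23 P S Q]; ring
  have H3smul : ∀ (f : F) (P Q S : V), H P Q (f • S) = f * H P Q S := by
    intro f P Q S
    rw [hH.alt23 P Q (f • S), H2smul f P S Q, hH.alt23 P S Q]; ring
  have Hexp : ∀ i : Fin 4,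
      H X Y (e i) = ∑ a, ∑ b, g X (e a) * (g Y (e b) * H (e a) (e b) (e i)) := by
    intro i
    conv_lhs => rw [hspan X, hspan Y]
    simp only [Fin.sum_univ_four, hH.add_left, hH.smul_left, H2add, H2smul]
    ring
  have main : ∑ i, H X Y (e i) * h (e i) = 0 := by
    simp only [Hexp, hhdef, hodge31]
    exact main_aux (fun a b i => H (e a) (e b) (e i))
      (fun i j k => hH.alt12 _ _ _) (fun i j k => hH.alt23 _ _ _)
      (fun a => g X (e a)) (fun b => g Y (e b))
  have key2 : h (D X Y) = h (lc X Y) := by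
    rw [hsum (D X Y), hsum (lc X Y)]
    have hd : ∀ i : Fin 4, g (D X Y) (e i) = g (lc X Y) (e i) + cR F (1/2) * H X Y (e i) :=
      fun i => hDdef X Y (e i)
    simp only [hd]
    have m' := main
    rw [Fin.sum_univ_four] at m'
    rw [Fin.sum_univ_four, Fin.sum_univ_four]
    linear_combination cR F (1/2) * m'
  simp only [covDer1]
  rw [key2]


end
end

section
/- For any curvature operator 𝓡 on Λ² of an oriented Riemannian 4-manifold written in block form (A B; C D) with respect to the splitting Λ² = Λ₊ ⊕ Λ₋, with *A = A, *D = −D and B = 0, one has Tr(*𝓡*𝓡) = Tr(A²+D²) ≥ |Tr(A²−D²)| = |Tr(𝓡*𝓡)| pointwise; hence the integrals give 2χ ≥ 3|τ|. -/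
lemma trace_comp_adjoint_nonneg' {E : Type} [NormedAddCommGroup E]
    [InnerProductSpace ℝ E] [FiniteDimensional ℝ E] (A : E →ₗ[ℝ] E) :
    0 ≤ LinearMap.trace ℝ E (A ∘ₗ LinearMap.adjoint A) := by
  let b := stdOrthonormalBasis ℝ E
  rw [LinearMap.trace_eq_matrix_trace ℝ b.toBasis, Matrix.trace]
  apply Finset.sum_nonneg
  intro i _
  have : (LinearMap.toMatrix b.toBasis b.toBasis (A ∘ₗ LinearMap.adjoint A)).diag i
      = b.repr ((A ∘ₗ LinearMap.adjoint A) (b i)) i := by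
    simp [Matrix.diag, LinearMap.toMatrix_apply, OrthonormalBasis.coe_toBasis,
      OrthonormalBasis.coe_toBasis_repr_apply]
  rw [this, b.repr_apply_apply]
  have h2 : (inner ℝ (b i) ((A ∘ₗ LinearMap.adjoint A) (b i)) : ℝ)
      = inner ℝ (LinearMap.adjoint A (b i)) (LinearMap.adjoint A (b i)) := by
    rw [LinearMap.comp_apply, ← LinearMap.adjoint_inner_left]
  rw [h2]
  exact real_inner_self_nonneg

lemma trace_block' {P N : Type} [NormedAddCommGroup P] [InnerProductSpace ℝ P]
    [FiniteDimensional ℝ P] [NormedAddCommGroup N] [InnerProductSpace ℝ N]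
    [FiniteDimensional ℝ N] (f : P →ₗ[ℝ] P) (g : P →ₗ[ℝ] N) (h : N →ₗ[ℝ] N) :
    LinearMap.trace ℝ (P × N)
      ((f ∘ₗ LinearMap.fst ℝ P N).prod (g ∘ₗ LinearMap.fst ℝ P N + h ∘ₗ LinearMap.snd ℝ P N))
      = LinearMap.trace ℝ P f + LinearMap.trace ℝ N h := by
  have hdecomp : (f ∘ₗ LinearMap.fst ℝ P N).prod
        (g ∘ₗ LinearMap.fst ℝ P N + h ∘ₗ LinearMap.snd ℝ P N)
      = f.prodMap h + LinearMap.inr ℝ P N ∘ₗ (g ∘ₗ LinearMap.fst ℝ P N) := by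
    ext x <;> simp
  rw [hdecomp, map_add, LinearMap.trace_prodMap', LinearMap.trace_comp_comm']
  have : (g ∘ₗ LinearMap.fst ℝ P N) ∘ₗ LinearMap.inr ℝ P N = 0 := by ext x; simp
  rw [this]
  simp

/-- pointwise linear algebra of a curvature operator on `Λ² = Λ₊ ⊕ Λ₋` in
block form `(A 0; C D)` with the Hodge star acting as `+1` on `Λ₊` and `-1` on `Λ₋`:
`Tr(*𝓡*𝓡) = Tr(A²+D²) ≥ |Tr(A²−D²)| = |Tr(𝓡*𝓡)|`, and hence the Gauss-Bonnet and
signature integrals give `2χ ≥ 3|τ|`. -/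
theorem block_curvature_trace_inequality
    {P N : Type} [NormedAddCommGroup P] [InnerProductSpace ℝ P] [FiniteDimensional ℝ P]
    [NormedAddCommGroup N] [InnerProductSpace ℝ N] [FiniteDimensional ℝ N]
    (A : P →ₗ[ℝ] P) (D : N →ₗ[ℝ] N) (C : P →ₗ[ℝ] N)
    -- "the traces are of `A Aᵗ` type"
    (hA : LinearMap.trace ℝ P (A ∘ₗ A) = LinearMap.trace ℝ P (A ∘ₗ LinearMap.adjoint A))
    (hD : LinearMap.trace ℝ N (D ∘ₗ D) = LinearMap.trace ℝ N (D ∘ₗ LinearMap.adjoint D))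
    -- the curvature operator `𝓡 = (A 0; C D)` (the `Λ₋ → Λ₊` block `B` vanishes)
    (R : P × N →ₗ[ℝ] P × N)
    (hR : R = (A.comp (LinearMap.fst ℝ P N)).prod
        ((C.comp (LinearMap.fst ℝ P N)) + (D.comp (LinearMap.snd ℝ P N))))
    -- the Hodge star `* = id ⊕ (-id)`
    (star : P × N →ₗ[ℝ] P × N)
    (hstar : star = (LinearMap.id : P →ₗ[ℝ] P).prodMap (-(LinearMap.id : N →ₗ[ℝ] N))) :
    LinearMap.trace ℝ (P × N) ((star ∘ₗ R) ∘ₗ (star ∘ₗ R))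
        = LinearMap.trace ℝ P (A ∘ₗ A) + LinearMap.trace ℝ N (D ∘ₗ D)
    ∧ LinearMap.trace ℝ (P × N) (R ∘ₗ (star ∘ₗ R))
        = LinearMap.trace ℝ P (A ∘ₗ A) - LinearMap.trace ℝ N (D ∘ₗ D)
    ∧ |LinearMap.trace ℝ (P × N) (R ∘ₗ (star ∘ₗ R))|
        ≤ LinearMap.trace ℝ (P × N) ((star ∘ₗ R) ∘ₗ (star ∘ₗ R))
    ∧ ∀ χ τ c : ℝ, 0 ≤ c →
        8 * Real.pi ^ 2 * χ = c * LinearMap.trace ℝ (P × N) ((star ∘ₗ R) ∘ₗ (star ∘ₗ R)) →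
        12 * Real.pi ^ 2 * τ = c * LinearMap.trace ℝ (P × N) (R ∘ₗ (star ∘ₗ R)) →
        2 * χ ≥ 3 * |τ| := by
  have h1 : (star ∘ₗ R) ∘ₗ (star ∘ₗ R)
      = ((A ∘ₗ A) ∘ₗ LinearMap.fst ℝ P N).prod
        (((D ∘ₗ C - C ∘ₗ A) ∘ₗ LinearMap.fst ℝ P N) + ((D ∘ₗ D) ∘ₗ LinearMap.snd ℝ P N)) := by
    subst hR hstar; ext x <;> simp [sub_eq_add_neg]
  have h2 : R ∘ₗ (star ∘ₗ R)
      = ((A ∘ₗ A) ∘ₗ LinearMap.fst ℝ P N).prod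
        (((C ∘ₗ A - D ∘ₗ C) ∘ₗ LinearMap.fst ℝ P N) + ((-(D ∘ₗ D)) ∘ₗ LinearMap.snd ℝ P N)) := by
    subst hR hstar; ext x <;> simp [sub_eq_add_neg]
  have t1 : LinearMap.trace ℝ (P × N) ((star ∘ₗ R) ∘ₗ (star ∘ₗ R))
      = LinearMap.trace ℝ P (A ∘ₗ A) + LinearMap.trace ℝ N (D ∘ₗ D) := by
    rw [h1, trace_block']
  have t2 : LinearMap.trace ℝ (P × N) (R ∘ₗ (star ∘ₗ R))
      = LinearMap.trace ℝ P (A ∘ₗ A) - LinearMap.trace ℝ N (D ∘ₗ D) := by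
    rw [h2, trace_block', map_neg]; ring
  have hApos : 0 ≤ LinearMap.trace ℝ P (A ∘ₗ A) := hA ▸ trace_comp_adjoint_nonneg' A
  have hDpos : 0 ≤ LinearMap.trace ℝ N (D ∘ₗ D) := hD ▸ trace_comp_adjoint_nonneg' D
  refine ⟨t1, t2, ?_, ?_⟩
  · rw [t1, t2]
    rw [abs_le]
    constructor <;> linarith
  · intro χ τ c hc h8 h12
    rw [t1] at h8; rw [t2] at h12
    have hπ : (0:ℝ) < Real.pi ^ 2 := by positivity
    have habs : |12 * Real.pi ^ 2 * τ| ≤ c * (LinearMap.trace ℝ P (A ∘ₗ A) + LinearMap.trace ℝ N (D ∘ₗ D)) := by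
      rw [h12, abs_mul, abs_of_nonneg hc]
      apply mul_le_mul_of_nonneg_left _ hc
      rw [abs_le]; constructor <;> linarith
    rw [← h8] at habs
    rw [abs_mul, abs_of_pos (by positivity : (0:ℝ) < 12 * Real.pi ^ 2)] at habs
    nlinarith [abs_nonneg τ]
end
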